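/- Let c > 0 and t₀ ∈ ℝ. Let y : ℝ → ℝ be twice differentiable on [t₀, ∞) satisfying y''(t) ≥ c² · y(t) > 0 for all t ≥ t₀, and y'(t₀) > 0. Then for every t ≥ t₀ one has y'(t) ≥ √(c²(y(t)² − y(t₀)²) + y'(t₀)²). In particular y'(t) ≥ y'(t₀) > 0 for all t ≥ t₀. -/

import Mathlib

/-!
Multiplying `y'' ≥ c² y` by `y'` shows that the energy `y'² - c² y²` is nondecreasing as long as
`y' ≥ 0`. Since `y > 0`, the inequality `y'' ≥ c² y` already makes `y'` nondecreasing, so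
`y' ≥ y'(t₀) > 0` throughout, the energy at `t` dominates the energy at `t₀`, and taking square
roots gives the bound.
-/

open Set Real

theorem monotoneOn_Ici_of_hasDerivWithinAt_nonneg {f f' : ℝ → ℝ} {a : ℝ}
    (hf : ∀ t ∈ Ici a, HasDerivWithinAt f (f' t) (Ici a) t) (hf' : ∀ t ∈ Ioi a, 0 ≤ f' t) :
    MonotoneOn f (Ici a) := by
  refine monotoneOn_of_hasDerivWithinAt_nonneg (f' := f') (convex_Ici a)
    (fun t ht => (hf t ht).continuousWithinAt) (fun t ht => ?_) (fun t ht => ?_)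
  · rw [interior_Ici] at ht ⊢
    exact (hf t (Ioi_subset_Ici_self ht)).mono Ioi_subset_Ici_self
  · rw [interior_Ici] at ht
    exact hf' t ht

theorem HasDerivWithinAt.energy {y y' : ℝ → ℝ} {a c : ℝ} {s : Set ℝ} {t : ℝ}
    (hy : HasDerivWithinAt y (y' t) s t) (hy' : HasDerivWithinAt y' a s t) :
    HasDerivWithinAt (fun u => y' u ^ 2 - c ^ 2 * y u ^ 2)
      (2 * y' t * (a - c ^ 2 * y t)) s t :=
  ((hy'.fun_pow 2).fun_sub ((hy.fun_pow 2).const_mul (c ^ 2))).congr_deriv (by push_cast; ring)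

theorem stmt3_general (c t₀ : ℝ)
    (y y' y'' : ℝ → ℝ)
    (hy1 : ∀ t ∈ Ici t₀, HasDerivWithinAt y (y' t) (Ici t₀) t)
    (hy2 : ∀ t ∈ Ici t₀, HasDerivWithinAt y' (y'' t) (Ici t₀) t)
    (hineq : ∀ t ∈ Ici t₀, c ^ 2 * y t ≤ y'' t)
    (hypos : ∀ t ∈ Ici t₀, 0 < y t)
    (hinit' : 0 < y' t₀) :
    ∀ t ∈ Ici t₀,
      Real.sqrt (c ^ 2 * ((y t) ^ 2 - (y t₀) ^ 2) + (y' t₀) ^ 2) ≤ y' t ∧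
        y' t₀ ≤ y' t := by
  have hy'_mono : MonotoneOn y' (Ici t₀) :=
    monotoneOn_Ici_of_hasDerivWithinAt_nonneg hy2 fun t ht =>
      (mul_nonneg (sq_nonneg c) (hypos t (Ioi_subset_Ici_self ht)).le).trans
        (hineq t (Ioi_subset_Ici_self ht))
  have hy'_ge : ∀ t ∈ Ici t₀, y' t₀ ≤ y' t := fun t ht => hy'_mono self_mem_Ici ht ht
  have henergy_mono : MonotoneOn (fun u => y' u ^ 2 - c ^ 2 * y u ^ 2) (Ici t₀) :=
    monotoneOn_Ici_of_hasDerivWithinAt_nonneg (fun t ht => (hy1 t ht).energy (hy2 t ht))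
      fun t ht => mul_nonneg (mul_nonneg two_pos.le
        (hinit'.le.trans (hy'_ge t (Ioi_subset_Ici_self ht))))
        (sub_nonneg.2 (hineq t (Ioi_subset_Ici_self ht)))
  intro t ht
  refine ⟨?_, hy'_ge t ht⟩
  have henergy : c ^ 2 * (y t ^ 2 - y t₀ ^ 2) + y' t₀ ^ 2 ≤ y' t ^ 2 := by
    linarith [henergy_mono self_mem_Ici ht ht]
  calc √(c ^ 2 * (y t ^ 2 - y t₀ ^ 2) + y' t₀ ^ 2) ≤ √(y' t ^ 2) := Real.sqrt_le_sqrt henergy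
    _ = y' t := Real.sqrt_sq (hinit'.le.trans (hy'_ge t ht))

/-- Energy (first-integral) inequality from the proof of Lemma 3.5:
if `y'' ≥ c² y > 0` on `[t₀, ∞)` and `y'(t₀) > 0`, then
`y'(t) ≥ √(c²(y(t)² − y(t₀)²) + y'(t₀)²)`, and in particular `y'(t) ≥ y'(t₀) > 0`. -/
theorem stmt3 (c t₀ : ℝ) (hc : 0 < c)
    (y y' y'' : ℝ → ℝ)
    (hy1 : ∀ t ∈ Ici t₀, HasDerivWithinAt y (y' t) (Ici t₀) t)
    (hy2 : ∀ t ∈ Ici t₀, HasDerivWithinAt y' (y'' t) (Ici t₀) t)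
    (hineq : ∀ t ∈ Ici t₀, c ^ 2 * y t ≤ y'' t)
    (hypos : ∀ t ∈ Ici t₀, 0 < y t)
    (hinit' : 0 < y' t₀) :
    ∀ t ∈ Ici t₀,
      Real.sqrt (c ^ 2 * ((y t) ^ 2 - (y t₀) ^ 2) + (y' t₀) ^ 2) ≤ y' t ∧
        y' t₀ ≤ y' t :=
  stmt3_general c t₀ y y' y'' hy1 hy2 hineq hypos hinit'
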